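/- Let T be a maximal symmetric linear relation in a Hilbert space 𝔥 with n₊(T) = 0 (so ℂ₊ ⊆ ρ(T*) in the relation sense). Then T has a unique generalized resolvent, namely R(λ) = (T* − λ)⁻¹ for λ ∈ ℂ₊ and R(λ) = (T − λ)⁻¹ for λ ∈ ℂ₋. -/

import Mathlib

/-!
For `Im λ > 0` only the self-adjointness of `T̃` matters: compressing `(u, ι h + λ u) ∈ T̃ = T̃*`
to `𝔥` lands in `T*`.

For `Im λ < 0`, the estimate `‖g - λ f‖ ≥ |Im λ| ‖f‖` on the symmetric relation `T` makes
`ran (T - λ)` closed, and its orthogonal complement is `ker (T* - λ̄) = 0` because `n₊(T) = 0`.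
So `T - λ` is onto, and the lift to `𝔥̃` of `(T - λ)⁻¹ h` must be `(T̃ - λ)⁻¹ ι h`, since the
symmetric relation `T̃ - λ` is injective.
-/

open scoped ComplexInnerProductSpace

def adjRel {𝔥 : Type*} [NormedAddCommGroup 𝔥] [InnerProductSpace ℂ 𝔥]
    (T : Submodule ℂ (𝔥 × 𝔥)) : Submodule ℂ (𝔥 × 𝔥) where
  carrier := {p | ∀ q ∈ T, ⟪p.2, q.1⟫ = ⟪p.1, q.2⟫}
  add_mem' := by
    intro a b ha hb q hq
    show ⟪a.2 + b.2, q.1⟫ = ⟪a.1 + b.1, q.2⟫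
    rw [inner_add_left, inner_add_left, ha q hq, hb q hq]
  zero_mem' := by
    intro q hq
    show ⟪(0 : 𝔥), q.1⟫ = ⟪(0 : 𝔥), q.2⟫
    simp
  smul_mem' := by
    intro c a ha q hq
    show ⟪c • a.2, q.1⟫ = ⟪c • a.1, q.2⟫
    rw [inner_smul_left, inner_smul_left, ha q hq]

section

variable {𝔥 : Type*} [NormedAddCommGroup 𝔥] [InnerProductSpace ℂ 𝔥]

lemma im_inner_eq_zero_of_le_adjRel {T : Submodule ℂ (𝔥 × 𝔥)} (hsym : T ≤ adjRel T)
    {p : 𝔥 × 𝔥} (hp : p ∈ T) : (⟪p.2, p.1⟫).im = 0 := by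
  refine Complex.conj_eq_iff_im.mp ?_
  rw [inner_conj_symm]
  exact (hsym hp p hp).symm

lemma abs_im_mul_norm_le_norm_sub_smul {f g : 𝔥} (hreal : (⟪g, f⟫).im = 0) (l : ℂ) :
    |l.im| * ‖f‖ ≤ ‖g - l • f‖ := by
  rcases (norm_nonneg f).eq_or_lt with hf | hf
  · rw [← hf, mul_zero]
    exact norm_nonneg _
  have him : (⟪g - l • f, f⟫).im = l.im * ‖f‖ ^ 2 := by
    rw [inner_sub_left, inner_smul_left, inner_self_eq_norm_sq_to_K]
    simp [hreal, ← Complex.ofReal_pow]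
  refine le_of_mul_le_mul_right ?_ hf
  calc |l.im| * ‖f‖ * ‖f‖ = |(⟪g - l • f, f⟫).im| := by
        rw [him, abs_mul, abs_of_nonneg (sq_nonneg ‖f‖)]; ring
    _ ≤ ‖⟪g - l • f, f⟫‖ := Complex.abs_im_le_norm _
    _ ≤ ‖g - l • f‖ * ‖f‖ := norm_inner_le_norm _ _

lemma norm_le_mul_norm_sub_smul_of_le_adjRel {T : Submodule ℂ (𝔥 × 𝔥)} (hsym : T ≤ adjRel T)
    {l : ℂ} (hl : l.im ≠ 0) {p : 𝔥 × 𝔥} (hp : p ∈ T) :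
    ‖p‖ ≤ (1 + (1 + ‖l‖) / |l.im|) * ‖p.2 - l • p.1‖ := by
  set d := ‖p.2 - l • p.1‖
  have him : 0 < |l.im| := abs_pos.mpr hl
  have hd : 0 ≤ d := norm_nonneg _
  have hq : 0 ≤ d / |l.im| := by positivity
  have hld : 0 ≤ ‖l‖ * (d / |l.im|) := by positivity
  have h₁ : ‖p.1‖ ≤ d / |l.im| := by
    rw [le_div_iff₀ him, mul_comm]
    exact abs_im_mul_norm_le_norm_sub_smul (im_inner_eq_zero_of_le_adjRel hsym hp) l
  have h₂ : ‖p.2‖ ≤ d + ‖l‖ * (d / |l.im|) := calc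
    ‖p.2‖ = ‖(p.2 - l • p.1) + l • p.1‖ := by rw [sub_add_cancel]
    _ ≤ d + ‖l‖ * ‖p.1‖ := (norm_add_le _ _).trans_eq (by rw [norm_smul])
    _ ≤ d + ‖l‖ * (d / |l.im|) := by gcongr
  have hK : (1 + (1 + ‖l‖) / |l.im|) * d = d + d / |l.im| + ‖l‖ * (d / |l.im|) := by ring
  rw [Prod.norm_def, hK]
  exact max_le (by linarith) (by linarith)

def rangeSubSMul (T : Submodule ℂ (𝔥 × 𝔥)) (l : ℂ) : Submodule ℂ 𝔥 :=
  T.map (LinearMap.snd ℂ 𝔥 𝔥 - l • LinearMap.fst ℂ 𝔥 𝔥)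

lemma mem_rangeSubSMul {T : Submodule ℂ (𝔥 × 𝔥)} {l : ℂ} {h : 𝔥} :
    h ∈ rangeSubSMul T l ↔ ∃ p ∈ T, p.2 - l • p.1 = h := by
  simp [rangeSubSMul]

lemma isClosed_rangeSubSMul [CompleteSpace 𝔥] {T : Submodule ℂ (𝔥 × 𝔥)}
    (hT : IsClosed (T : Set (𝔥 × 𝔥))) (hsym : T ≤ adjRel T) {l : ℂ} (hl : l.im ≠ 0) :
    IsClosed (rangeSubSMul T l : Set 𝔥) := by
  have : CompleteSpace T := hT.completeSpace_coe
  let f : T →L[ℂ] 𝔥 :=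
    (ContinuousLinearMap.snd ℂ 𝔥 𝔥 - l • ContinuousLinearMap.fst ℂ 𝔥 𝔥).comp T.subtypeL
  have hrange : Set.range f = rangeSubSMul T l := by
    ext h
    simp [f, mem_rangeSubSMul]
  have hanti : AntilipschitzWith (1 + (1 + ‖l‖) / |l.im|).toNNReal f :=
    f.antilipschitz_of_bound fun p => by
      rw [Real.coe_toNNReal _ (by positivity)]
      exact norm_le_mul_norm_sub_smul_of_le_adjRel hsym hl p.2
  exact hrange ▸ hanti.isClosed_range f.uniformContinuous

lemma mem_adjRel_of_mem_orthogonal_rangeSubSMul {T : Submodule ℂ (𝔥 × 𝔥)} {l : ℂ} {x : 𝔥}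
    (hx : x ∈ (rangeSubSMul T l)ᗮ) : (x, starRingEnd ℂ l • x) ∈ adjRel T := by
  intro q hq
  have h₀ : ⟪q.2 - l • q.1, x⟫ = 0 :=
    (Submodule.mem_orthogonal _ x).mp hx _ (mem_rangeSubSMul.mpr ⟨q, hq, rfl⟩)
  rw [inner_sub_left, inner_smul_left, sub_eq_zero] at h₀
  show ⟪starRingEnd ℂ l • x, q.1⟫ = ⟪x, q.2⟫
  rw [inner_smul_left, ← inner_conj_symm x q.2, h₀, map_mul, inner_conj_symm, Complex.conj_conj]

lemma rangeSubSMul_eq_top [CompleteSpace 𝔥] {T : Submodule ℂ (𝔥 × 𝔥)}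
    (hT : IsClosed (T : Set (𝔥 × 𝔥))) (hsym : T ≤ adjRel T) {l : ℂ} (hl : l.im ≠ 0)
    (hker : ∀ x : 𝔥, (x, starRingEnd ℂ l • x) ∈ adjRel T → x = 0) :
    rangeSubSMul T l = ⊤ := by
  have : CompleteSpace (rangeSubSMul T l) := (isClosed_rangeSubSMul hT hsym hl).completeSpace_coe
  refine Submodule.orthogonal_eq_bot_iff.mp ((Submodule.eq_bot_iff _).mpr fun x hx => ?_)
  exact hker x (mem_adjRel_of_mem_orthogonal_rangeSubSMul hx)

lemma eq_of_mem_of_le_adjRel {S : Submodule ℂ (𝔥 × 𝔥)} (hsym : S ≤ adjRel S) {l : ℂ}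
    (hl : l.im ≠ 0) {g u w : 𝔥} (hu : (u, g + l • u) ∈ S) (hw : (w, g + l • w) ∈ S) :
    u = w := by
  have hv : (u - w, l • (u - w)) ∈ S := by
    simpa [smul_sub] using S.sub_mem hu hw
  have hself := hsym hv _ hv
  rw [inner_smul_left, inner_smul_right] at hself
  have hinner : ⟪u - w, u - w⟫ = 0 := by
    by_contra hne
    exact hl (Complex.conj_eq_iff_im.mp (mul_right_cancel₀ hne hself))
  exact sub_eq_zero.mp (inner_self_eq_zero.mp hinner)

section Compression

variable {𝔥' : Type*} [NormedAddCommGroup 𝔥'] [InnerProductSpace ℂ 𝔥']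
  [CompleteSpace 𝔥] [CompleteSpace 𝔥']

lemma LinearIsometry.adjoint_apply_self (ι : 𝔥 →ₗᵢ[ℂ] 𝔥') (x : 𝔥) :
    ContinuousLinearMap.adjoint ι.toContinuousLinearMap (ι x) = x :=
  congr($(ι.adjoint_comp_self) x)

lemma adjoint_mem_adjRel_of_map_mem {T : Submodule ℂ (𝔥 × 𝔥)} {Ttil : Submodule ℂ (𝔥' × 𝔥')}
    {ι : 𝔥 →ₗᵢ[ℂ] 𝔥'} (hext : ∀ p ∈ T, ((ι p.1, ι p.2) : 𝔥' × 𝔥') ∈ Ttil) {u v : 𝔥'}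
    (huv : (u, v) ∈ adjRel Ttil) :
    (ContinuousLinearMap.adjoint ι.toContinuousLinearMap u,
      ContinuousLinearMap.adjoint ι.toContinuousLinearMap v) ∈ adjRel T := by
  intro q hq
  simp only [ContinuousLinearMap.adjoint_inner_left]
  exact huv _ (hext q hq)

end Compression

end

theorem statement12 {𝔥 𝔥' : Type*}
    [NormedAddCommGroup 𝔥] [InnerProductSpace ℂ 𝔥] [CompleteSpace 𝔥]
    [NormedAddCommGroup 𝔥'] [InnerProductSpace ℂ 𝔥'] [CompleteSpace 𝔥']
    (T : Submodule ℂ (𝔥 × 𝔥)) (hT : IsClosed (T : Set (𝔥 × 𝔥))) (hsym : T ≤ adjRel T)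
    -- n₊(T) = 0 (hence T is maximal symmetric)
    (hdef : ∀ l : ℂ, 0 < l.im → ∀ h : 𝔥, (h, l • h) ∈ adjRel T → h = 0)
    -- an exit space self-adjoint extension T̃ of T in 𝔥̃ ⊇ 𝔥
    (ι : 𝔥 →ₗᵢ[ℂ] 𝔥') (Ttil : Submodule ℂ (𝔥' × 𝔥')) (hsa : Ttil = adjRel Ttil)
    (hext : ∀ p ∈ T, ((ι p.1, ι p.2) : 𝔥' × 𝔥') ∈ Ttil)
    -- the corresponding generalized resolvent R(λ) = P_𝔥 (T̃ − λ)⁻¹ ↾ 𝔥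
    (R : ℂ → (𝔥 →L[ℂ] 𝔥))
    (hR : ∀ l : ℂ, l.im ≠ 0 → ∀ h : 𝔥, ∃ u : 𝔥',
      (u, ι h + l • u) ∈ Ttil ∧
        R l h = ContinuousLinearMap.adjoint ι.toContinuousLinearMap u) :
    -- R(λ) = (T* − λ)⁻¹ for λ ∈ ℂ₊ and R(λ) = (T − λ)⁻¹ for λ ∈ ℂ₋
    (∀ l : ℂ, 0 < l.im → ∀ h : 𝔥, (R l h, h + l • R l h) ∈ adjRel T) ∧
    (∀ l : ℂ, l.im < 0 → ∀ h : 𝔥, (R l h, h + l • R l h) ∈ T) := by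
  refine ⟨fun l hl h => ?_, fun l hl h => ?_⟩
  · obtain ⟨u, hu, hRu⟩ := hR l hl.ne' h
    have hcomp := adjoint_mem_adjRel_of_map_mem hext (hsa ▸ hu : _ ∈ adjRel Ttil)
    rwa [map_add, map_smul, LinearIsometry.adjoint_apply_self, ← hRu] at hcomp
  · have hker : ∀ x : 𝔥, (x, starRingEnd ℂ l • x) ∈ adjRel T → x = 0 :=
      hdef _ (by simpa using neg_pos.mpr hl)
    obtain ⟨p, hp, hph⟩ :=
      mem_rangeSubSMul.mp (rangeSubSMul_eq_top hT hsym hl.ne hker ▸ Submodule.mem_top : h ∈ _)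
    obtain ⟨u, hu, hRu⟩ := hR l hl.ne h
    have hpT : (p.1, h + l • p.1) ∈ T := by
      rw [← hph, sub_add_cancel]
      exact hp
    have hu_eq : u = ι p.1 :=
      eq_of_mem_of_le_adjRel hsa.le hl.ne hu (by simpa using hext _ hpT)
    rwa [hRu, hu_eq, LinearIsometry.adjoint_apply_self]
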